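/- arXiv:1710.07270 — 3 statements merged into one kernel-verified Lean document; each statement's English description precedes it below -/
import Mathlib

section
/- Let K be a field and L/K a separable field extension of degree 3 that is not Galois. Then for every prime ℓ, the restriction map H^1(K, ℤ/ℓ) → H^1(L, ℤ/ℓ) is injective. -/
/-- We topologize `ℤ/ℓ` discretely, so that `H¹(K, ℤ/ℓ)` (trivial action) is the group of
continuous homomorphisms from the absolute Galois group to `ℤ/ℓ`. -/
instance (n : ℕ) : TopologicalSpace (ZMod n) := ⊥

/-!
Let `Ω` be an algebraic closure of `K` and `G = Gal(Ω/K)`. Then `G` acts transitively on the three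
`K`-embeddings `L → Ω`, and `Gal(Ω/L)` is the stabilizer of the inclusion `x`. Since `L/K` is not
normal, some `t ∈ Gal(Ω/L)` swaps the other two embeddings, so `G` acts on them through all of `S₃`.
A character trivial on `Gal(Ω/L)` is constant on each fibre of `g ↦ g • x`. It kills the
commutator `⁅s, t⁆`, which acts as a `3`-cycle, hence the fibre over `⁅s, t⁆ • x`, and, composing
with `t`, the fibre over the remaining point.
-/

open MulAction
open scoped commutatorElement

theorem Set.eq_or_eq_or_eq_of_ncard_eq_three {α : Type*} {s : Set α} (hs : s.ncard = 3)
    {a b c : α} (ha : a ∈ s) (hb : b ∈ s) (hc : c ∈ s) (hab : a ≠ b) (hac : a ≠ c) (hbc : b ≠ c)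
    {w : α} (hw : w ∈ s) : w = a ∨ w = b ∨ w = c := by
  have habc : ({a, b, c} : Set α) = s :=
    Set.eq_of_subset_of_ncard_le (by simp [Set.insert_subset_iff, ha, hb, hc])
      (by rw [hs, Set.ncard_eq_three.2 ⟨a, b, c, hab, hac, hbc, rfl⟩])
      (Set.finite_of_ncard_ne_zero (by omega))
  simpa [← habc] using hw

section GroupAction

variable {G X : Type*} [Group G] [MulAction G X] {x : X}

theorem MulAction.smul_ne_self_of_ncard_orbit_eq_three (horbit : (orbit G x).ncard = 3) {t : G}
    (ht : t ∈ stabilizer G x) {y : X} (hy : y ∈ orbit G x) (hty : t • y ≠ y) :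
    ∀ z ∈ orbit G x, z ≠ x → t • z ≠ z := by
  have hyx : y ≠ x := fun h => hty (h ▸ ht)
  have htyx : t • y ≠ x := fun h => hyx (smul_left_cancel t (h.trans ht.symm))
  intro z hz hzx
  rcases Set.eq_or_eq_or_eq_of_ncard_eq_three horbit (mem_orbit_self x) hy
    (mem_orbit_of_mem_orbit t hy) hyx.symm htyx.symm hty.symm hz with rfl | rfl | rfl
  · exact absurd rfl hzx
  · exact hty
  · exact fun h => hty (smul_left_cancel t h)

namespace MonoidHom

theorem map_eq_of_smul_eq {A : Type*} [Group A] (χ : G →* A) (hχ : stabilizer G x ≤ χ.ker)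
    {g h : G} (hgh : g • x = h • x) : χ g = χ h := by
  have hmem : g⁻¹ * h ∈ stabilizer G x := by
    rw [mem_stabilizer_iff, mul_smul, ← hgh, inv_smul_smul]
  rw [← inv_mul_eq_one, ← map_inv, ← map_mul]
  exact hχ hmem

theorem eq_one_of_ncard_orbit_eq_three {A : Type*} [CommGroup A] (χ : G →* A)
    (horbit : (orbit G x).ncard = 3) (hχ : stabilizer G x ≤ χ.ker) {t : G}
    (ht : t ∈ stabilizer G x) {y : X} (hy : y ∈ orbit G x) (hty : t • y ≠ y) : χ = 1 := by
  have hmoved := smul_ne_self_of_ncard_orbit_eq_three horbit ht hy hty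
  obtain ⟨s, rfl⟩ := hy
  -- `⁅s, t⁆ • x = x` would make `s⁻¹ • x ≠ x` a second fixed point of `t`
  have hk : ⁅s, t⁆ • x ≠ x := by
    intro h
    have hsx : s⁻¹ • x ≠ x := fun h' => hty (by rw [inv_smul_eq_iff.1 h'] at ht; exact ht)
    rw [commutatorElement_def, mul_smul, mul_smul, mul_smul, inv_smul_eq_iff.2 ht.symm] at h
    exact hmoved _ (mem_orbit _ _) hsx ((smul_eq_iff_eq_inv_smul s).1 h)
  have hχk : χ ⁅s, t⁆ = 1 := by
    rw [map_commutatorElement, commutatorElement_eq_one_iff_mul_comm, mul_comm]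
  have hkt : t • ⁅s, t⁆ • x ≠ ⁅s, t⁆ • x := hmoved _ (mem_orbit _ _) hk
  have htk : t • ⁅s, t⁆ • x ≠ x := fun h => hk (smul_left_cancel t (h.trans ht.symm))
  ext g
  rcases Set.eq_or_eq_or_eq_of_ncard_eq_three horbit (mem_orbit_self x) (mem_orbit _ _)
    (mem_orbit_of_mem_orbit t (mem_orbit _ _)) hk.symm htk.symm hkt.symm
    (mem_orbit x g) with h | h | h
  · exact hχ h
  · rw [one_apply, map_eq_of_smul_eq χ hχ h, hχk]
  · rw [one_apply, map_eq_of_smul_eq χ hχ (h.trans (mul_smul t _ x).symm), map_mul, hχ ht, hχk,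
      mul_one]

end MonoidHom

end GroupAction

instance {R A B : Type*} [CommSemiring R] [Semiring A] [Semiring B] [Algebra R A]
    [Algebra R B] : MulAction (B ≃ₐ[R] B) (A →ₐ[R] B) where
  smul g φ := (g : B →ₐ[R] B).comp φ
  one_smul _ := rfl
  mul_smul _ _ _ := rfl

namespace IntermediateField

variable {F E : Type*} [Field F] [Field E] [Algebra F E] (K : IntermediateField F E)

theorem stabilizer_val : stabilizer Gal(E/F) K.val = K.fixingSubgroup := by
  ext g
  rw [mem_stabilizer_iff, mem_fixingSubgroup_iff, AlgHom.ext_iff, Subtype.forall]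
  rfl

theorem orbit_val [Normal F E] : orbit Gal(E/F) K.val = Set.univ :=
  Set.eq_univ_of_forall fun φ =>
    ⟨.ofBijective (φ.liftNormal E) (AlgHom.normal_bijective F E E _),
      AlgHom.ext (φ.liftNormal_commutes E)⟩

theorem exists_mem_fixingSubgroup_smul_ne [Normal F E] [Algebra.IsSeparable F K]
    (hK : ¬ Normal F K) : ∃ t ∈ K.fixingSubgroup, ∃ φ : K →ₐ[F] E, t • φ ≠ φ := by
  obtain ⟨φ, hφ⟩ := not_forall.1 (mt normal_iff_forall_fieldRange_le.2 hK)
  obtain ⟨_, ⟨a, rfl⟩, ha⟩ := Set.not_subset.1 hφ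
  have : Normal K E := Normal.tower_top_of_normal F K E
  have hsep : IsSeparable K (φ a) := by
    refine IsSeparable.tower_top K (?_ : IsSeparable F (φ a))
    rw [IsSeparable, minpoly.algHom_eq φ φ.injective]
    exact Algebra.IsSeparable.isSeparable F a
  obtain ⟨b, hab, hconj⟩ := (notMem_iff_exists_ne_and_isConjRoot hsep (Normal.splits ‹_› _)).1
    (fun h => ha (by obtain ⟨c, hc⟩ := Algebra.mem_bot.1 h; exact hc ▸ c.2))
  obtain ⟨t, ht⟩ := hconj.symm.exists_algEquiv
  exact ⟨t.restrictScalars F, fun c => t.commutes c, φ,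
    fun h => hab (ht ▸ DFunLike.congr_fun h a).symm⟩

end IntermediateField

/-- Let `K` be a field and `L/K` a separable field extension of degree 3 that is not Galois
(realized as an intermediate field of an algebraic closure `Ω` of `K`).  Then for every prime
`ℓ`, the restriction map `H¹(K, ℤ/ℓ) → H¹(L, ℤ/ℓ)` is injective: every continuous character
`χ : Gal(Ω/K) → ℤ/ℓ` vanishing on `Gal(Ω/L)` is trivial. -/
theorem stmt1 (K : Type) [Field K]
    (L : IntermediateField K (AlgebraicClosure K))
    [Algebra.IsSeparable K L] (hdeg : Module.finrank K L = 3)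
    (hnotGal : ¬ IsGalois K L) :
    ∀ (ℓ : ℕ), ℓ.Prime →
      ∀ χ : ContinuousMonoidHom
          (AlgebraicClosure K ≃ₐ[K] AlgebraicClosure K) (Multiplicative (ZMod ℓ)),
        (∀ σ : AlgebraicClosure K ≃ₐ[L] AlgebraicClosure K,
            χ (σ.restrictScalars K) = 1) →
          ∀ τ, χ τ = 1 := by
  intro ℓ _ χ hχ
  have : FiniteDimensional K L := Module.finite_of_finrank_eq_succ hdeg
  obtain ⟨t, ht, φ, htφ⟩ :=
    L.exists_mem_fixingSubgroup_smul_ne fun h => hnotGal (isGalois_iff.2 ⟨inferInstance, h⟩)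
  have horbit : (orbit Gal(AlgebraicClosure K/K) L.val).ncard = 3 := by
    rw [L.orbit_val, Set.ncard_univ, Nat.card_eq_fintype_card, AlgHom.card, hdeg]
  have hstab : stabilizer Gal(AlgebraicClosure K/K) L.val ≤ χ.toMonoidHom.ker := by
    rw [L.stabilizer_val]
    exact fun g hg => hχ (IntermediateField.fixingSubgroupEquiv L ⟨g, hg⟩)
  have hχ1 := χ.toMonoidHom.eq_one_of_ncard_orbit_eq_three horbit hstab
    (L.stabilizer_val ▸ ht) (L.orbit_val ▸ Set.mem_univ φ) htφ
  exact fun τ => DFunLike.congr_fun hχ1 τ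
end

section
/- The hypersurface Y₀ of bidegree (2,2) in P² × P² over a field k of characteristic ≠ 2, defined by x y u² + x z t² + y z s² = 0 (with homogeneous coordinates (x:y:z) and (u:t:s)), has singular locus equal to the union of the three curves C_x: {x = s = 0, u²y + t²z = 0}, C_y: {y = t = 0, u²x + s²z = 0}, and C_z: {z = u = 0, t²x + s²y = 0}. -/
open MvPolynomial

/-- The hypersurface `Y₀` of bidegree (2,2) in `P² × P²` over a field `k` of characteristic ≠ 2,
defined by `x y u² + x z t² + y z s² = 0` (homogeneous coordinates `(x:y:z)` and `(u:t:s)`),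
has singular locus the union of the three curves
`C_x : {x = s = 0, u²y + t²z = 0}`, `C_y : {y = t = 0, u²x + s²z = 0}`,
`C_z : {z = u = 0, t²x + s²y = 0}`.
We express points of `P² × P²` by a pair of nonzero coordinate triples, and the singular locus by
the simultaneous vanishing of the bihomogeneous equation and all its partial derivatives. -/
theorem stmt8 (k : Type) [Field k] (h2 : (2 : k) ≠ 0)
    (F : MvPolynomial (Fin 6) k)
    -- coordinates `x = X 0`, `y = X 1`, `z = X 2`, `u = X 3`, `t = X 4`, `s = X 5`
    (hF : F = X 0 * X 1 * (X 3) ^ 2 + X 0 * X 2 * (X 4) ^ 2 + X 1 * X 2 * (X 5) ^ 2) :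
    ∀ x y z u t s : k, ¬ (x = 0 ∧ y = 0 ∧ z = 0) → ¬ (u = 0 ∧ t = 0 ∧ s = 0) →
      ((eval ![x, y, z, u, t, s] F = 0 ∧ ∀ i, eval ![x, y, z, u, t, s] (pderiv i F) = 0) ↔
        ((x = 0 ∧ s = 0 ∧ u ^ 2 * y + t ^ 2 * z = 0) ∨
         (y = 0 ∧ t = 0 ∧ u ^ 2 * x + s ^ 2 * z = 0) ∨
         (z = 0 ∧ u = 0 ∧ t ^ 2 * x + s ^ 2 * y = 0))) := by
  subst hF
  intro x y z u t s hxyz huts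
  have hv5 : (![x, y, z, u, t, s] : Fin 6 → k) 5 = s := rfl
  set P : MvPolynomial (Fin 6) k :=
    X 0 * X 1 * (X 3) ^ 2 + X 0 * X 2 * (X 4) ^ 2 + X 1 * X 2 * (X 5) ^ 2 with hP
  have E0 : eval ![x, y, z, u, t, s] (pderiv 0 P) = y * u ^ 2 + z * t ^ 2 := by
    simp only [hP, map_add, pderiv_mul, pderiv_pow, pderiv_X, Fin.isValue, ne_eq, Fin.reduceEq,
      not_false_eq_true, Pi.single_eq_of_ne, Pi.single_eq_same, map_zero, map_one,
      Matrix.cons_val_zero, Matrix.cons_val_one, Matrix.cons_val_two, Matrix.cons_val_three,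
      Matrix.cons_val_four, Matrix.head_cons, Matrix.tail_cons, zero_mul, mul_zero, add_zero,
      zero_add, mul_one, one_mul, Nat.cast_ofNat, eval_ofNat, Nat.add_one_sub_one, pow_one,
      map_mul, map_pow, eval_X, hv5]
    all_goals ring
  have E1 : eval ![x, y, z, u, t, s] (pderiv 1 P) = x * u ^ 2 + z * s ^ 2 := by
    simp only [hP, map_add, pderiv_mul, pderiv_pow, pderiv_X, Fin.isValue, ne_eq, Fin.reduceEq,
      not_false_eq_true, Pi.single_eq_of_ne, Pi.single_eq_same, map_zero, map_one,
      Matrix.cons_val_zero, Matrix.cons_val_one, Matrix.cons_val_two, Matrix.cons_val_three,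
      Matrix.cons_val_four, Matrix.head_cons, Matrix.tail_cons, zero_mul, mul_zero, add_zero,
      zero_add, mul_one, one_mul, Nat.cast_ofNat, eval_ofNat, Nat.add_one_sub_one, pow_one,
      map_mul, map_pow, eval_X, hv5]
    all_goals ring
  have E2 : eval ![x, y, z, u, t, s] (pderiv 2 P) = x * t ^ 2 + y * s ^ 2 := by
    simp only [hP, map_add, pderiv_mul, pderiv_pow, pderiv_X, Fin.isValue, ne_eq, Fin.reduceEq,
      not_false_eq_true, Pi.single_eq_of_ne, Pi.single_eq_same, map_zero, map_one,
      Matrix.cons_val_zero, Matrix.cons_val_one, Matrix.cons_val_two, Matrix.cons_val_three,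
      Matrix.cons_val_four, Matrix.head_cons, Matrix.tail_cons, zero_mul, mul_zero, add_zero,
      zero_add, mul_one, one_mul, Nat.cast_ofNat, eval_ofNat, Nat.add_one_sub_one, pow_one,
      map_mul, map_pow, eval_X, hv5]
    all_goals ring
  have E3 : eval ![x, y, z, u, t, s] (pderiv 3 P) = 2 * (x * y * u) := by
    simp only [hP, map_add, pderiv_mul, pderiv_pow, pderiv_X, Fin.isValue, ne_eq, Fin.reduceEq,
      not_false_eq_true, Pi.single_eq_of_ne, Pi.single_eq_same, map_zero, map_one,
      Matrix.cons_val_zero, Matrix.cons_val_one, Matrix.cons_val_two, Matrix.cons_val_three,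
      Matrix.cons_val_four, Matrix.head_cons, Matrix.tail_cons, zero_mul, mul_zero, add_zero,
      zero_add, mul_one, one_mul, Nat.cast_ofNat, eval_ofNat, Nat.add_one_sub_one, pow_one,
      map_mul, map_pow, eval_X, hv5]
    all_goals ring
  have E4 : eval ![x, y, z, u, t, s] (pderiv 4 P) = 2 * (x * z * t) := by
    simp only [hP, map_add, pderiv_mul, pderiv_pow, pderiv_X, Fin.isValue, ne_eq, Fin.reduceEq,
      not_false_eq_true, Pi.single_eq_of_ne, Pi.single_eq_same, map_zero, map_one,
      Matrix.cons_val_zero, Matrix.cons_val_one, Matrix.cons_val_two, Matrix.cons_val_three,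
      Matrix.cons_val_four, Matrix.head_cons, Matrix.tail_cons, zero_mul, mul_zero, add_zero,
      zero_add, mul_one, one_mul, Nat.cast_ofNat, eval_ofNat, Nat.add_one_sub_one, pow_one,
      map_mul, map_pow, eval_X, hv5]
    all_goals ring
  have E5 : eval ![x, y, z, u, t, s] (pderiv 5 P) = 2 * (y * z * s) := by
    simp only [hP, map_add, pderiv_mul, pderiv_pow, pderiv_X, Fin.isValue, ne_eq, Fin.reduceEq,
      not_false_eq_true, Pi.single_eq_of_ne, Pi.single_eq_same, map_zero, map_one,
      Matrix.cons_val_zero, Matrix.cons_val_one, Matrix.cons_val_two, Matrix.cons_val_three,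
      Matrix.cons_val_four, Matrix.head_cons, Matrix.tail_cons, zero_mul, mul_zero, add_zero,
      zero_add, mul_one, one_mul, Nat.cast_ofNat, eval_ofNat, Nat.add_one_sub_one, pow_one,
      map_mul, map_pow, eval_X, hv5]
    all_goals ring
  have EF : eval ![x, y, z, u, t, s] P = x * y * u ^ 2 + x * z * t ^ 2 + y * z * s ^ 2 := by
    simp only [hP, map_add, map_mul, map_pow, eval_X, Fin.isValue, Matrix.cons_val_zero,
      Matrix.cons_val_one, Matrix.cons_val_two, Matrix.cons_val_three, Matrix.cons_val_four,
      Matrix.head_cons, Matrix.tail_cons, hv5]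
  rw [EF]
  constructor
  · rintro ⟨hf, hd⟩
    have e0 := E0.symm.trans (hd 0)
    have e1 := E1.symm.trans (hd 1)
    have e2 := E2.symm.trans (hd 2)
    have f3 : x * y * u = 0 := (mul_eq_zero.1 (E3.symm.trans (hd 3))).resolve_left h2
    have f4 : x * z * t = 0 := (mul_eq_zero.1 (E4.symm.trans (hd 4))).resolve_left h2
    have f5 : y * z * s = 0 := (mul_eq_zero.1 (E5.symm.trans (hd 5))).resolve_left h2
    by_cases hx : x = 0
    · subst hx
      by_cases hs : s = 0
      · exact Or.inl ⟨rfl, hs, by linear_combination e0⟩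
      · exfalso
        refine hxyz ⟨rfl, ?_, ?_⟩
        · have : y * (s * s) = 0 := by linear_combination e2
          exact (mul_eq_zero.1 this).resolve_right (mul_ne_zero hs hs)
        · have : z * (s * s) = 0 := by linear_combination e1
          exact (mul_eq_zero.1 this).resolve_right (mul_ne_zero hs hs)
    by_cases hy : y = 0
    · subst hy
      by_cases ht : t = 0
      · exact Or.inr (Or.inl ⟨rfl, ht, by linear_combination e1⟩)
      · exfalso
        refine hx ?_
        have : x * (t * t) = 0 := by linear_combination e2
        exact (mul_eq_zero.1 this).resolve_right (mul_ne_zero ht ht)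
    by_cases hz : z = 0
    · subst hz
      by_cases hu : u = 0
      · exact Or.inr (Or.inr ⟨rfl, hu, by linear_combination e2⟩)
      · exfalso
        refine hy ?_
        have : y * (u * u) = 0 := by linear_combination e0
        exact (mul_eq_zero.1 this).resolve_right (mul_ne_zero hu hu)
    · refine absurd ⟨?_, ?_, ?_⟩ huts
      · rcases mul_eq_zero.1 f3 with h | h
        · exact absurd ((mul_eq_zero.1 h).resolve_left hx) hy
        · exact h
      · rcases mul_eq_zero.1 f4 with h | h
        · exact absurd ((mul_eq_zero.1 h).resolve_left hx) hz
        · exact h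
      · rcases mul_eq_zero.1 f5 with h | h
        · exact absurd ((mul_eq_zero.1 h).resolve_left hy) hz
        · exact h
  · have key : ∀ w0 w1 w2 w3 w4 w5 : k,
        eval ![x, y, z, u, t, s] (pderiv 0 P) = w0 →
        eval ![x, y, z, u, t, s] (pderiv 1 P) = w1 →
        eval ![x, y, z, u, t, s] (pderiv 2 P) = w2 →
        eval ![x, y, z, u, t, s] (pderiv 3 P) = w3 →
        eval ![x, y, z, u, t, s] (pderiv 4 P) = w4 →
        eval ![x, y, z, u, t, s] (pderiv 5 P) = w5 →
        w0 = 0 → w1 = 0 → w2 = 0 → w3 = 0 → w4 = 0 → w5 = 0 →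
        ∀ i : Fin 6, eval ![x, y, z, u, t, s] (pderiv i P) = 0 := by
      intro w0 w1 w2 w3 w4 w5 a0 a1 a2 a3 a4 a5 b0 b1 b2 b3 b4 b5 i
      fin_cases i
      · exact a0.trans b0
      · exact a1.trans b1
      · exact a2.trans b2
      · exact a3.trans b3
      · exact a4.trans b4
      · exact a5.trans b5
    rintro (⟨hx, hs, he⟩ | ⟨hy, ht, he⟩ | ⟨hz, hu, he⟩) <;> subst_vars
    · exact ⟨by linear_combination, key _ _ _ _ _ _ E0 E1 E2 E3 E4 E5
        (by linear_combination he) (by ring) (by ring) (by ring) (by ring) (by ring)⟩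
    · exact ⟨by linear_combination, key _ _ _ _ _ _ E0 E1 E2 E3 E4 E5
        (by ring) (by linear_combination he) (by ring) (by ring) (by ring) (by ring)⟩
    · exact ⟨by linear_combination, key _ _ _ _ _ _ E0 E1 E2 E3 E4 E5
        (by ring) (by ring) (by linear_combination he) (by ring) (by ring) (by ring)⟩
end

section
/- Let k be an algebraically closed field of characteristic ≠ 2 and a, b ∈ k with a ≠ 0 and a + b ≠ 0. Then the singular locus of the cubic surface S: a·u(u−v)(t−v) + b·u(u−v)t + t z² = 0 in P³ consists of exactly the three points {z = u = v = 0}, {z = 0, u = 0, a v − (a+b) t = 0}, and {z = 0, u − v = 0, a v − (a+b) t = 0}. -/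
open MvPolynomial

set_option maxHeartbeats 1000000 in
/-- Let `k` be an algebraically closed field of characteristic ≠ 2 and `a b : k` with `a ≠ 0`
and `a + b ≠ 0`.  The singular locus of the cubic surface
`S : a·u(u−v)(t−v) + b·u(u−v)t + t z² = 0` in `P³` (homogeneous coordinates `(u:v:t:z)`)
consists of exactly the three points `{z = u = v = 0}`, `{z = 0, u = 0, a v − (a+b) t = 0}`,
and `{z = 0, u − v = 0, a v − (a+b) t = 0}`: for every nonzero coordinate vector, the equation
and all its partial derivatives vanish iff one of these three conditions holds. -/
theorem stmt11 (k : Type) [Field k] [IsAlgClosed k] (h2 : (2 : k) ≠ 0)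
    (a b : k) (ha : a ≠ 0) (hab : a + b ≠ 0)
    (F : MvPolynomial (Fin 4) k)
    -- coordinates `u = X 0`, `v = X 1`, `t = X 2`, `z = X 3`
    (hF : F = C a * X 0 * (X 0 - X 1) * (X 2 - X 1) + C b * X 0 * (X 0 - X 1) * X 2
            + X 2 * (X 3) ^ 2) :
    ∀ u v t z : k, ¬ (u = 0 ∧ v = 0 ∧ t = 0 ∧ z = 0) →
      ((eval ![u, v, t, z] F = 0 ∧ ∀ i, eval ![u, v, t, z] (pderiv i F) = 0) ↔
        ((z = 0 ∧ u = 0 ∧ v = 0) ∨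
         (z = 0 ∧ u = 0 ∧ a * v - (a + b) * t = 0) ∨
         (z = 0 ∧ u - v = 0 ∧ a * v - (a + b) * t = 0))) := by
  subst hF
  intro u v t z hnz
  constructor
  · rintro ⟨hE, hD⟩
    have h0 := hD 0
    have h1 := hD 1
    have hd2 := hD 2
    have h3 := hD 3
    simp [pderiv_mul, pderiv_X, Pi.single_apply] at h0 h1 hd2 h3 hE
    ring_nf at h0 h1 hd2 h3 hE
    -- h3 : t = 0 ∨ 2 = 0 ∨ z = 0
    rcases h3 with ht | h3 | hz
    · -- t = 0
      subst ht
      by_cases hz : z = 0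
      · subst hz
        have huv : u * (u - v) = 0 := by
          have h' : (a + b) * (u * (u - v)) = 0 := by linear_combination hd2
          exact (mul_eq_zero.mp h').resolve_left hab
        rcases mul_eq_zero.mp huv with hu | huv
        · subst hu
          have hv : v = 0 := by
            have h' : a * v ^ 2 = 0 := by linear_combination h0
            exact pow_eq_zero_iff (two_ne_zero) |>.mp ((mul_eq_zero.mp h').resolve_left ha)
          subst hv
          exact Or.inl ⟨rfl, rfl, rfl⟩
        · have huv' : u = v := sub_eq_zero.mp huv
          subst huv'
          have hu : u = 0 := by
            have h' : a * u ^ 2 = 0 := by linear_combination -h0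
            exact pow_eq_zero_iff (two_ne_zero) |>.mp ((mul_eq_zero.mp h').resolve_left ha)
          subst hu
          exact Or.inl ⟨rfl, rfl, rfl⟩
      · -- t = 0, z ≠ 0 : contradiction
        exfalso
        have hz2 : z ^ 2 ≠ 0 := pow_ne_zero _ hz
        have hu : u ≠ 0 := by
          rintro rfl; apply hz2; linear_combination hd2
        have hv : v = 0 := by
          have h' : a * (u * (v * (v - u))) = 0 := by linear_combination hE
          have h'' := ((mul_eq_zero.mp (((mul_eq_zero.mp h').resolve_left ha))).resolve_left hu)
          rcases mul_eq_zero.mp h'' with h | h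
          · exact h
          · exfalso; apply hz2
            have hvu : v = u := sub_eq_zero.mp h
            subst hvu
            linear_combination hd2
        subst hv
        apply hu
        have h' : a * u ^ 2 = 0 := by linear_combination -h1
        exact pow_eq_zero_iff (two_ne_zero) |>.mp ((mul_eq_zero.mp h').resolve_left ha)
    · exact absurd h3 h2
    · -- z = 0
      subst hz
      have huv : u * (u - v) = 0 := by
        have h' : (a + b) * (u * (u - v)) = 0 := by linear_combination hd2
        exact (mul_eq_zero.mp h').resolve_left hab
      rcases mul_eq_zero.mp huv with hu | huv
      · subst hu
        have h' : v * (a * v - (a + b) * t) = 0 := by linear_combination h0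
        rcases mul_eq_zero.mp h' with hv | hvt
        · exact Or.inl ⟨rfl, rfl, hv⟩
        · exact Or.inr (Or.inl ⟨rfl, rfl, hvt⟩)
      · have huv' : u = v := sub_eq_zero.mp huv
        subst huv'
        have h' : u * (a * u - (a + b) * t) = 0 := by linear_combination -h0
        rcases mul_eq_zero.mp h' with hu | hvt
        · subst hu
          exact Or.inl ⟨rfl, rfl, rfl⟩
        · exact Or.inr (Or.inr ⟨rfl, sub_self u, hvt⟩)
  · rintro (⟨hz, hu, hv⟩ | ⟨hz, hu, hvt⟩ | ⟨hz, huv, hvt⟩)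
    · subst hz; subst hu; subst hv
      refine ⟨by simp, fun i => ?_⟩
      fin_cases i <;> simp [pderiv_mul, pderiv_X, pderiv_pow, Pi.single_apply]
    · subst hz; subst hu
      refine ⟨by simp, fun i => ?_⟩
      fin_cases i <;> simp [pderiv_mul, pderiv_X, pderiv_pow, Pi.single_apply]
      linear_combination v * hvt
    · have huv' : u = v := sub_eq_zero.mp huv
      subst huv'; subst hz
      refine ⟨by simp, fun i => ?_⟩
      fin_cases i <;> simp [pderiv_mul, pderiv_X, pderiv_pow, Pi.single_apply]
      · linear_combination -u * hvt
      · linear_combination u * hvt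
end
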